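/- Let P be a nondisjunctive nested program with no occurrences of 'not'. Then the collection of consistent sets of literals satisfying P is closed under intersection: if X and Y both satisfy P, so does X ∩ Y. -/

import Mathlib

open scoped Classical

inductive Lit where
  | pos : ℕ → Lit
  | neg : ℕ → Lit
deriving DecidableEq

inductive Fml where
  | bot : Fml
  | top : Fml
  | lit : Lit → Fml
  | not : Fml → Fml
  | conj : Fml → Fml → Fml
  | disj : Fml → Fml → Fml
deriving DecidableEq

structure Rule where
  head : Fml
  body : Fml
deriving DecidableEq

abbrev Prog := Set Rule

/-- A set of literals is consistent if it contains no complementary pair. -/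
def Consistent (X : Set Lit) : Prop :=
  ∀ a : ℕ, ¬ (Lit.pos a ∈ X ∧ Lit.neg a ∈ X)

def Sat (X : Set Lit) : Fml → Prop
  | Fml.bot => False
  | Fml.top => True
  | Fml.lit l => l ∈ X
  | Fml.not F => ¬ Sat X F
  | Fml.conj F G => Sat X F ∧ Sat X G
  | Fml.disj F G => Sat X F ∨ Sat X G

def SatRule (X : Set Lit) (r : Rule) : Prop := Sat X r.body → Sat X r.head

def SatProg (X : Set Lit) (P : Prog) : Prop := ∀ r ∈ P, SatRule X r

/-- The reduct of a formula relative to X. -/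
noncomputable def Reduct (X : Set Lit) : Fml → Fml
  | Fml.bot => Fml.bot
  | Fml.top => Fml.top
  | Fml.lit l => Fml.lit l
  | Fml.not F => if Sat X F then Fml.bot else Fml.top
  | Fml.conj F G => Fml.conj (Reduct X F) (Reduct X G)
  | Fml.disj F G => Fml.disj (Reduct X F) (Reduct X G)

noncomputable def ReductRule (X : Set Lit) (r : Rule) : Rule :=
  ⟨Reduct X r.head, Reduct X r.body⟩

noncomputable def ReductProg (X : Set Lit) (P : Prog) : Prog :=
  ReductRule X '' P

/-- Y is an answer set for P: Y is minimal among consistent sets satisfying the reduct of P w.r.t. Y. -/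
def AnswerSet (Y : Set Lit) (P : Prog) : Prop :=
  Consistent Y ∧ SatProg Y (ReductProg Y P) ∧
    ∀ Z : Set Lit, Consistent Z → SatProg Z (ReductProg Y P) → Z ⊆ Y → Z = Y

def SEModel (P : Prog) (X Y : Set Lit) : Prop :=
  Consistent X ∧ Consistent Y ∧ X ⊆ Y ∧ SatProg Y P ∧ SatProg X (ReductProg Y P)

def StrongEq (P Q : Prog) : Prop :=
  ∀ R : Prog, ∀ Y : Set Lit, AnswerSet Y (P ∪ R) ↔ AnswerSet Y (Q ∪ R)

def Fml.negFree : Fml → Prop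
  | Fml.bot => True
  | Fml.top => True
  | Fml.lit l => ∃ a, l = Lit.pos a
  | Fml.not F => F.negFree
  | Fml.conj F G => F.negFree ∧ G.negFree
  | Fml.disj F G => F.negFree ∧ G.negFree

def ProgNegFree (P : Prog) : Prop := ∀ r ∈ P, r.head.negFree ∧ r.body.negFree

/-- The set of atoms (positive literals) in a set of literals. -/
def PosLits (Z : Set Lit) : Set Lit := {l ∈ Z | ∃ a, l = Lit.pos a}

def AtomsOnly (Z : Set Lit) : Prop := ∀ l ∈ Z, ∃ a, l = Lit.pos a

def Fml.elementary (F : Fml) : Prop :=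
  F = Fml.bot ∨ F = Fml.top ∨ ∃ l : Lit, F = Fml.lit l

/-- The head of a nondisjunctive rule: an elementary formula possibly preceded by not. -/
def NdHead (F : Fml) : Prop :=
  F.elementary ∨ ∃ G : Fml, F = Fml.not G ∧ G.elementary

def Nondisjunctive (P : Prog) : Prop := ∀ r ∈ P, NdHead r.head

def Fml.notFree : Fml → Prop
  | Fml.bot => True
  | Fml.top => True
  | Fml.lit _ => True
  | Fml.not _ => False
  | Fml.conj F G => F.notFree ∧ G.notFree
  | Fml.disj F G => F.notFree ∧ G.notFree


/-! A not-free body is monotone in the interpretation, so if `X ∩ Y` satisfies it then so do `X`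
and `Y`; a nondisjunctive head without `not` is elementary, and an elementary formula true in
both `X` and `Y` is true in `X ∩ Y`. -/

theorem Fml.notFree.sat_mono {X Y : Set Lit} (h : X ⊆ Y) :
    ∀ {F : Fml}, F.notFree → Sat X F → Sat Y F
  | Fml.bot, _, hs => hs
  | Fml.top, _, _ => trivial
  | Fml.lit _, _, hs => h hs
  | Fml.conj _ _, hn, hs => ⟨hn.1.sat_mono h hs.1, hn.2.sat_mono h hs.2⟩
  | Fml.disj _ _, hn, hs => hs.imp (hn.1.sat_mono h) (hn.2.sat_mono h)

theorem Fml.elementary.sat_inter {F : Fml} (hF : F.elementary) {X Y : Set Lit}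
    (hX : Sat X F) (hY : Sat Y F) : Sat (X ∩ Y) F := by
  rcases hF with rfl | rfl | ⟨l, rfl⟩
  exacts [hX, trivial, ⟨hX, hY⟩]

theorem NdHead.elementary_of_notFree {F : Fml} (h : NdHead F) (hF : F.notFree) :
    F.elementary := by
  rcases h with h | ⟨G, rfl, -⟩
  exacts [h, hF.elim]

theorem SatRule.inter {r : Rule} (hhead : r.head.elementary) (hbody : r.body.notFree)
    {X Y : Set Lit} (hX : SatRule X r) (hY : SatRule Y r) : SatRule (X ∩ Y) r := fun hb =>
  hhead.sat_inter (hX (hbody.sat_mono Set.inter_subset_left hb))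
    (hY (hbody.sat_mono Set.inter_subset_right hb))

theorem stmt9_general (P : Prog) (hnd : Nondisjunctive P)
    (hnf : ∀ r ∈ P, r.head.notFree ∧ r.body.notFree)
    (X Y : Set Lit)
    (hsX : SatProg X P) (hsY : SatProg Y P) :
    SatProg (X ∩ Y) P := fun r hr =>
  SatRule.inter ((hnd r hr).elementary_of_notFree (hnf r hr).1) (hnf r hr).2
    (hsX r hr) (hsY r hr)

/-- for a nondisjunctive program with no occurrences of not, the
consistent sets of literals satisfying it are closed under intersection. -/
theorem stmt9 (P : Prog) (hnd : Nondisjunctive P)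
    (hnf : ∀ r ∈ P, r.head.notFree ∧ r.body.notFree)
    (X Y : Set Lit) (hX : Consistent X) (hY : Consistent Y)
    (hsX : SatProg X P) (hsY : SatProg Y P) :
    SatProg (X ∩ Y) P :=
  stmt9_general P hnd hnf X Y hsX hsY
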